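/- A vector w ∈ ℝ^{I_V} lies in the column space of the design matrix X if and only if there exist α ∈ ℝ^T, a symmetric real T×T matrix B and an orbit-invariant γ : I_V → ℝ (γ_i = γ_j whenever j ∈ D(i)) such that w_i = u_iᵀα + u_iᵀB u_i + γ_i for every cell i. Consequently, a positive probability distribution π on I_V satisfies the GS[f] model if and only if F(π/π^S) = Xϑ for some real parameter vector ϑ. (Equivalence of Definition 1 with the homogeneous linear predictor form.) -/

import Mathlib

open Finset

namespace GSf

variable {r T : ℕ}

/-- A cell of the `r^T` contingency table. -/
abbrev Cell (r T : ℕ) := Fin T → Fin r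

/-- `orbit i = D(i)`: the set of coordinate permutations of the cell `i`. -/
def orbit (i : Cell r T) : Finset (Cell r T) :=
  Finset.univ.filter fun j => ∃ σ : Equiv.Perm (Fin T), j = i ∘ σ

/-- Symmetrization `π^S_i = (1/|D(i)|) ∑_{j ∈ D(i)} π_j`. -/
noncomputable def symmz (π : Cell r T → ℝ) (i : Cell r T) : ℝ :=
  (∑ j ∈ orbit i, π j) / ((orbit i).card : ℝ)

/-- The quadratic predictor `u_iᵀ α + u_iᵀ B u_i`. -/
def quadForm (u : Fin r → ℝ) (α : Fin T → ℝ) (B : Matrix (Fin T) (Fin T) ℝ)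
    (i : Cell r T) : ℝ :=
  (∑ s, α s * u (i s)) + ∑ s, ∑ t, B s t * u (i s) * u (i t)

/-- A function on cells is orbit-invariant if it is constant on each `D(i)`. -/
def OrbitInvariant (γ : Cell r T → ℝ) : Prop :=
  ∀ i j, j ∈ orbit i → γ i = γ j

/-- The `f`-divergence `D_f(p ∥ q) = ∑ q_i f(p_i/q_i)`. -/
noncomputable def Df (f : ℝ → ℝ) (p q : Cell r T → ℝ) : ℝ :=
  ∑ i, q i * f (p i / q i)

/-- Conditional probability of a cell given its symmetric set. -/
noncomputable def condProb (π : Cell r T → ℝ) (i : Cell r T) : ℝ :=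
  π i / ∑ j ∈ orbit i, π j

/-- Complete symmetry (S) model. -/
def CompletelySymmetric (π : Cell r T → ℝ) : Prop :=
  ∀ i, ∀ j ∈ orbit i, π i = π j

/-- Marginal mean `μ_s = ∑_i u_{i_s} π_i`. -/
noncomputable def margMean (u : Fin r → ℝ) (π : Cell r T → ℝ) (s : Fin T) : ℝ :=
  ∑ i, u (i s) * π i

/-- Marginal second moment `∑_i u_{i_s}² π_i`. -/
noncomputable def margSecond (u : Fin r → ℝ) (π : Cell r T → ℝ) (s : Fin T) : ℝ :=
  ∑ i, u (i s) ^ 2 * π i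

/-- Mixed moment `∑_i u_{i_s} u_{i_t} π_i`. -/
noncomputable def mixedMoment (u : Fin r → ℝ) (π : Cell r T → ℝ) (s t : Fin T) : ℝ :=
  ∑ i, u (i s) * u (i t) * π i

/-- Marginal variance `σ_s²`. -/
noncomputable def margVar (u : Fin r → ℝ) (π : Cell r T → ℝ) (s : Fin T) : ℝ :=
  margSecond u π s - (margMean u π s) ^ 2

/-- Marginal correlation `ρ_{st}`. -/
noncomputable def margCorr (u : Fin r → ℝ) (π : Cell r T → ℝ) (s t : Fin T) : ℝ :=
  (mixedMoment u π s t - margMean u π s * margMean u π t) /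
    (Real.sqrt (margVar u π s) * Real.sqrt (margVar u π t))

/-- The GS[f] model. -/
def IsGSf (u : Fin r → ℝ) (F : ℝ → ℝ) (π : Cell r T → ℝ) : Prop :=
  ∃ (α : Fin T → ℝ) (B : Matrix (Fin T) (Fin T) ℝ) (γ : Cell r T → ℝ),
    B.IsSymm ∧ OrbitInvariant γ ∧
    ∀ i, F (π i / symmz π i) = quadForm u α B i + γ i

/-- Index type of unordered pairs `s < t`, ordered lexicographically. -/
def PairIdx (T : ℕ) : Type := {p : Fin T × Fin T // p.1 < p.2}

instance : Fintype (PairIdx T) := Subtype.fintype _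

/-- Lexicographic linear order on pairs, via the injection `(s,t) ↦ s*T + t`. -/
noncomputable instance : LinearOrder (PairIdx T) :=
  LinearOrder.lift' (fun p : PairIdx T => T * p.val.1.val + p.val.2.val) (by
    intro a b h
    have hT : 0 < T := a.val.1.pos
    simp only at h
    have h2 : a.val.2.val = b.val.2.val := by
      have hm := congrArg (· % T) h
      simpa [Nat.mul_add_mod, Nat.mod_eq_of_lt a.val.2.isLt,
        Nat.mod_eq_of_lt b.val.2.isLt] using hm
    have h1 : a.val.1.val = b.val.1.val := by
      rw [h2] at h
      exact Nat.eq_of_mul_eq_mul_left hT (Nat.add_right_cancel h)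
    exact Subtype.ext (Prod.ext (Fin.ext h1) (Fin.ext h2)))

/-- The increasing (lexicographic) enumeration of the pairs. -/
noncomputable def pairEnum (T : ℕ) : Fin (Fintype.card (PairIdx T)) ≃o PairIdx T :=
  monoEquivOfFin _ rfl

/-- The column `s_{s_k} ⊙ s_{t_k}` for the `k`-th pair in lexicographic order. -/
noncomputable def pairCol (u : Fin r → ℝ) (k : Fin (Fintype.card (PairIdx T))) :
    Cell r T → ℝ :=
  fun i => u (i (pairEnum T k).val.1) * u (i (pairEnum T k).val.2)

/-- Indicator column of the orbit of `i₀` (a column of `X^S`). -/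
def indicatorCol (i₀ : Cell r T) : Cell r T → ℝ :=
  fun i => if i ∈ orbit i₀ then 1 else 0

/-- The columns `Δ₁^{(h)}, Δ₂^{(h)}, Δ_{V₂}^{(k)}` of the design matrix. -/
noncomputable def deltaCols (u : Fin r → ℝ) : Set (Cell r T → ℝ) :=
  {v | ∃ (h : ℕ) (hh : h + 1 < T),
      v = fun i => u (i ⟨h, Nat.lt_of_succ_lt hh⟩) - u (i ⟨h + 1, hh⟩)} ∪
  {v | ∃ (h : ℕ) (hh : h + 1 < T),
      v = fun i => u (i ⟨h, Nat.lt_of_succ_lt hh⟩) ^ 2 - u (i ⟨h + 1, hh⟩) ^ 2} ∪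
  {v | ∃ (k : ℕ) (hk : k + 1 < Fintype.card (PairIdx T)),
      v = pairCol u ⟨k, Nat.lt_of_succ_lt hk⟩ - pairCol u ⟨k + 1, hk⟩}

/-- The set of columns of the design matrix `X`. -/
noncomputable def designColSet (u : Fin r → ℝ) : Set (Cell r T → ℝ) :=
  deltaCols u ∪ {v | ∃ i₀, v = indicatorCol i₀}

section Aux

lemma mem_orbit_iff {i j : Cell r T} :
    j ∈ orbit i ↔ ∃ σ : Equiv.Perm (Fin T), j = i ∘ σ := by
  simp [orbit]

lemma self_mem_orbit (i : Cell r T) : i ∈ orbit i :=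
  mem_orbit_iff.2 ⟨1, rfl⟩

lemma mem_orbit_symm {i j : Cell r T} (h : j ∈ orbit i) : i ∈ orbit j := by
  obtain ⟨σ, rfl⟩ := mem_orbit_iff.1 h
  exact mem_orbit_iff.2 ⟨σ⁻¹, by funext t; simp⟩

lemma mem_orbit_trans {i j k : Cell r T} (h1 : j ∈ orbit i) (h2 : k ∈ orbit j) :
    k ∈ orbit i := by
  obtain ⟨σ, rfl⟩ := mem_orbit_iff.1 h1
  obtain ⟨τ, rfl⟩ := mem_orbit_iff.1 h2
  exact mem_orbit_iff.2 ⟨σ * τ, by funext t; simp [Equiv.Perm.mul_apply, Function.comp]⟩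

lemma orbit_eq_of_mem {i j : Cell r T} (h : j ∈ orbit i) : orbit j = orbit i := by
  ext k
  exact ⟨fun hk => mem_orbit_trans h hk, fun hk => mem_orbit_trans (mem_orbit_symm h) hk⟩

lemma orbit_card_pos (i : Cell r T) : 0 < (orbit i).card :=
  Finset.card_pos.2 ⟨i, self_mem_orbit i⟩

/-- telescoping: if consecutive differences are in a submodule, all differences are. -/
lemma tele_mem {N : ℕ} (M : Submodule ℝ (Cell r T → ℝ)) (g : Fin N → Cell r T → ℝ)
    (hc : ∀ (k : ℕ) (hk : k + 1 < N), g ⟨k, Nat.lt_of_succ_lt hk⟩ - g ⟨k + 1, hk⟩ ∈ M)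
    (a b : Fin N) : g a - g b ∈ M := by
  have hN : 0 < N := a.pos
  have key : ∀ (n : ℕ) (hn : n < N), g ⟨0, hN⟩ - g ⟨n, hn⟩ ∈ M := by
    intro n
    induction n with
    | zero => intro hn; simpa using M.zero_mem
    | succ m ih =>
      intro hn
      have hm : m < N := Nat.lt_of_succ_lt hn
      have := M.add_mem (ih hm) (hc m hn)
      simpa [sub_add_sub_cancel] using this
  have h1 := key a.val a.isLt
  have h2 := key b.val b.isLt
  have := M.sub_mem h2 h1
  simpa [sub_sub_sub_cancel_left] using this

variable (u : Fin r → ℝ)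

lemma indicatorCol_invariant (i₀ : Cell r T) :
    OrbitInvariant (indicatorCol i₀ : Cell r T → ℝ) := by
  intro i j hj
  have hiff : (i ∈ orbit i₀) ↔ (j ∈ orbit i₀) :=
    ⟨fun h => mem_orbit_trans h hj, fun h => mem_orbit_trans h (mem_orbit_symm hj)⟩
  simp [indicatorCol, hiff]

lemma orbitInvariant_mem_span {γ : Cell r T → ℝ} (hγ : OrbitInvariant γ) :
    γ ∈ Submodule.span ℝ (designColSet u) := by
  have hrep : γ = ∑ i₀ : Cell r T, (γ i₀ / ((orbit i₀).card : ℝ)) • indicatorCol i₀ := by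
    funext i
    rw [Finset.sum_apply]
    have hterm : ∀ i₀ : Cell r T,
        ((γ i₀ / ((orbit i₀).card : ℝ)) • indicatorCol i₀) i
          = if i₀ ∈ orbit i then γ i / ((orbit i).card : ℝ) else 0 := by
      intro i₀
      by_cases h : i₀ ∈ orbit i
      · have h' : i ∈ orbit i₀ := mem_orbit_symm h
        simp [indicatorCol, h', h, self_mem_orbit i, hγ i i₀ h, orbit_eq_of_mem h]
      · have h' : i ∉ orbit i₀ := fun hh => h (mem_orbit_symm hh)
        simp [indicatorCol, h', h]
    rw [Finset.sum_congr rfl fun i₀ _ => hterm i₀]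
    rw [Finset.sum_ite_mem, Finset.univ_inter, Finset.sum_const, nsmul_eq_mul]
    have hc : ((orbit i).card : ℝ) ≠ 0 := Nat.cast_ne_zero.2 (orbit_card_pos i).ne'
    field_simp
  rw [hrep]
  exact Submodule.sum_mem _ fun i₀ _ => Submodule.smul_mem _ _
    (Submodule.subset_span (Or.inr ⟨i₀, rfl⟩))

lemma s1_invariant : OrbitInvariant (fun i : Cell r T => ∑ k, u (i k)) := by
  intro i j hj
  obtain ⟨σ, rfl⟩ := mem_orbit_iff.1 hj
  exact (Equiv.sum_comp σ fun k => u (i k)).symm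

lemma s2_invariant : OrbitInvariant (fun i : Cell r T => ∑ k, u (i k) ^ 2) := by
  intro i j hj
  obtain ⟨σ, rfl⟩ := mem_orbit_iff.1 hj
  exact (Equiv.sum_comp σ fun k => u (i k) ^ 2).symm

end Aux
section Aux2

variable (u : Fin r → ℝ)

lemma sq_sum_identity (x : Fin T → ℝ) :
    (∑ s, x s) * (∑ t, x t)
      = ∑ s, x s ^ 2 + 2 * ∑ p : PairIdx T, x p.val.1 * x p.val.2 := by
  classical
  have hlt : ∑ p ∈ Finset.univ.filter (fun p : Fin T × Fin T => p.1 < p.2), x p.1 * x p.2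
      = ∑ p : PairIdx T, x p.val.1 * x p.val.2 :=
    Finset.sum_subtype _ (fun p => by simp) _
  have hdiag : ∑ p ∈ Finset.univ.filter (fun p : Fin T × Fin T => p.1 = p.2), x p.1 * x p.2
      = ∑ s, x s ^ 2 := by
    refine Finset.sum_nbij' (fun p => p.1) (fun s => (s, s)) ?_ ?_ ?_ ?_ ?_
    · intro a _; exact Finset.mem_univ _
    · intro a _; simp
    · intro a ha
      have := (Finset.mem_filter.1 ha).2
      exact Prod.ext rfl this
    · intro a _; rfl
    · intro a ha
      have := (Finset.mem_filter.1 ha).2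
      rw [← this]; ring
  have hswap : ∑ p ∈ Finset.univ.filter (fun p : Fin T × Fin T => p.2 < p.1), x p.1 * x p.2
      = ∑ p ∈ Finset.univ.filter (fun p : Fin T × Fin T => p.1 < p.2), x p.1 * x p.2 := by
    refine Finset.sum_nbij' Prod.swap Prod.swap ?_ ?_ ?_ ?_ ?_
    · intro a ha; simpa using (Finset.mem_filter.1 ha).2
    · intro a ha; simpa using (Finset.mem_filter.1 ha).2
    · intro a _; rfl
    · intro a _; rfl
    · intro a _; exact mul_comm _ _
  have e1 : (Finset.univ.filter fun p : Fin T × Fin T => ¬ p.1 = p.2).filter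
        (fun p => p.1 < p.2) = Finset.univ.filter (fun p : Fin T × Fin T => p.1 < p.2) := by
    ext p
    simp only [Finset.mem_filter, Finset.mem_univ, true_and]
    exact ⟨fun h => h.2, fun h => ⟨ne_of_lt h, h⟩⟩
  have e2 : (Finset.univ.filter fun p : Fin T × Fin T => ¬ p.1 = p.2).filter
        (fun p => ¬ p.1 < p.2) = Finset.univ.filter (fun p : Fin T × Fin T => p.2 < p.1) := by
    ext p
    simp only [Finset.mem_filter, Finset.mem_univ, true_and]
    constructor
    · rintro ⟨h1, h2⟩; exact (Ne.lt_or_gt h1).resolve_left h2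
    · intro h; exact ⟨(ne_of_lt h).symm, asymm h⟩
  have main : (∑ s, x s) * (∑ t, x t) = ∑ p : Fin T × Fin T, x p.1 * x p.2 := by
    rw [Fintype.sum_mul_sum]
    exact (Fintype.sum_prod_type (f := fun p : Fin T × Fin T => x p.1 * x p.2)).symm
  rw [main,
    ← Finset.sum_filter_add_sum_filter_not Finset.univ (fun p : Fin T × Fin T => p.1 = p.2)
      (fun p => x p.1 * x p.2),
    ← Finset.sum_filter_add_sum_filter_not
      (Finset.univ.filter fun p : Fin T × Fin T => ¬ p.1 = p.2)
      (fun p : Fin T × Fin T => p.1 < p.2) (fun p => x p.1 * x p.2),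
    e1, e2, hdiag, hswap, hlt]
  ring

lemma psum_invariant :
    OrbitInvariant (fun i : Cell r T => ∑ p : PairIdx T, u (i p.val.1) * u (i p.val.2)) := by
  intro i j hj
  have h1 := s1_invariant u i j hj
  have h2 := s2_invariant u i j hj
  simp only at h1 h2
  have e1 := sq_sum_identity (fun k => u (i k))
  have e2 := sq_sum_identity (fun k => u (j k))
  simp only at e1 e2
  rw [h1, h2] at e1
  simp only
  linarith

end Aux2
section Aux3

variable (u : Fin r → ℝ)

lemma d1_mem (hT : 0 < T) (h : Fin T) :
    (fun i : Cell r T => u (i h)) ∈ Submodule.span ℝ (designColSet u) := by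
  set M := Submodule.span ℝ (designColSet u) with hM
  have hdiff : ∀ a b : Fin T, (fun i : Cell r T => u (i a)) - (fun i => u (i b)) ∈ M := by
    refine tele_mem M (fun h i => u (i h)) ?_
    intro k hk
    exact Submodule.subset_span (Or.inl (Or.inl (Or.inl ⟨k, hk, rfl⟩)))
  have hs1 : (fun i : Cell r T => ∑ k, u (i k)) ∈ M := orbitInvariant_mem_span u (s1_invariant u)
  have hsum : ((∑ b : Fin T, ((fun i : Cell r T => u (i h)) - fun i => u (i b)))
      + fun i : Cell r T => ∑ k, u (i k)) ∈ M :=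
    M.add_mem (Submodule.sum_mem _ fun b _ => hdiff h b) hs1
  have hmem := M.smul_mem ((T : ℝ)⁻¹) hsum
  have hTc : (T : ℝ) ≠ 0 := Nat.cast_ne_zero.2 hT.ne'
  convert hmem using 1
  funext i
  simp only [Pi.smul_apply, Pi.add_apply, Finset.sum_apply, Pi.sub_apply, smul_eq_mul]
  rw [Finset.sum_sub_distrib, Finset.sum_const, Finset.card_univ, Fintype.card_fin,
    nsmul_eq_mul]
  field_simp
  ring

lemma d2_mem (hT : 0 < T) (h : Fin T) :
    (fun i : Cell r T => u (i h) ^ 2) ∈ Submodule.span ℝ (designColSet u) := by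
  set M := Submodule.span ℝ (designColSet u) with hM
  have hdiff : ∀ a b : Fin T,
      (fun i : Cell r T => u (i a) ^ 2) - (fun i => u (i b) ^ 2) ∈ M := by
    refine tele_mem M (fun h i => u (i h) ^ 2) ?_
    intro k hk
    exact Submodule.subset_span (Or.inl (Or.inl (Or.inr ⟨k, hk, rfl⟩)))
  have hs2 : (fun i : Cell r T => ∑ k, u (i k) ^ 2) ∈ M :=
    orbitInvariant_mem_span u (s2_invariant u)
  have hsum : ((∑ b : Fin T, ((fun i : Cell r T => u (i h) ^ 2) - fun i => u (i b) ^ 2))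
      + fun i : Cell r T => ∑ k, u (i k) ^ 2) ∈ M :=
    M.add_mem (Submodule.sum_mem _ fun b _ => hdiff h b) hs2
  have hmem := M.smul_mem ((T : ℝ)⁻¹) hsum
  have hTc : (T : ℝ) ≠ 0 := Nat.cast_ne_zero.2 hT.ne'
  convert hmem using 1
  funext i
  simp only [Pi.smul_apply, Pi.add_apply, Finset.sum_apply, Pi.sub_apply, smul_eq_mul]
  rw [Finset.sum_sub_distrib, Finset.sum_const, Finset.card_univ, Fintype.card_fin,
    nsmul_eq_mul]
  field_simp
  ring

lemma pairCol_sum_eq :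
    (fun i : Cell r T => ∑ k, pairCol u k i)
      = fun i => ∑ p : PairIdx T, u (i p.val.1) * u (i p.val.2) := by
  funext i
  exact Fintype.sum_equiv (pairEnum T).toEquiv _ _ (fun k => rfl)

lemma pairCol_mem (hT : 2 ≤ T) (k : Fin (Fintype.card (PairIdx T))) :
    pairCol u k ∈ Submodule.span ℝ (designColSet u) := by
  set M := Submodule.span ℝ (designColSet u) with hM
  have hdiff : ∀ a b : Fin (Fintype.card (PairIdx T)), pairCol u a - pairCol u b ∈ M := by
    refine tele_mem M (fun k => pairCol u k) ?_
    intro m hm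
    exact Submodule.subset_span (Or.inl (Or.inr ⟨m, hm, rfl⟩))
  have hps : (fun i : Cell r T => ∑ k, pairCol u k i) ∈ M := by
    rw [pairCol_sum_eq]
    exact orbitInvariant_mem_span u (psum_invariant u)
  have hsum : ((∑ b : Fin (Fintype.card (PairIdx T)), (pairCol u k - pairCol u b))
      + fun i : Cell r T => ∑ m, pairCol u m i) ∈ M :=
    M.add_mem (Submodule.sum_mem _ fun b _ => hdiff k b) hps
  have hmem := M.smul_mem ((Fintype.card (PairIdx T) : ℝ)⁻¹) hsum
  have hNpos : 0 < Fintype.card (PairIdx T) := k.pos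
  have hNc : (Fintype.card (PairIdx T) : ℝ) ≠ 0 := Nat.cast_ne_zero.2 hNpos.ne'
  convert hmem using 1
  funext i
  simp only [Pi.smul_apply, Pi.add_apply, Finset.sum_apply, Pi.sub_apply, smul_eq_mul]
  rw [Finset.sum_sub_distrib, Finset.sum_const, Finset.card_univ, Fintype.card_fin,
    nsmul_eq_mul]
  field_simp
  ring

lemma pc_mem (hT : 2 ≤ T) (s t : Fin T) :
    (fun i : Cell r T => u (i s) * u (i t)) ∈ Submodule.span ℝ (designColSet u) := by
  have hT0 : 0 < T := by omega
  have key : ∀ a b : Fin T, a < b →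
      (fun i : Cell r T => u (i a) * u (i b)) ∈ Submodule.span ℝ (designColSet u) := by
    intro a b hab
    have hcol := pairCol_mem u hT ((pairEnum T).symm ⟨(a, b), hab⟩)
    have : pairCol u ((pairEnum T).symm ⟨(a, b), hab⟩)
        = fun i : Cell r T => u (i a) * u (i b) := by
      funext i
      have he : (pairEnum T) ((pairEnum T).symm ⟨(a, b), hab⟩) = ⟨(a, b), hab⟩ :=
        (pairEnum T).apply_symm_apply _
      simp only [pairCol]
      rw [he]
    rwa [this] at hcol
  rcases lt_trichotomy s t with h | h | h
  · exact key s t h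
  · subst h
    have := d2_mem u hT0 s
    have heq : (fun i : Cell r T => u (i s) * u (i s))
        = fun i : Cell r T => u (i s) ^ 2 := by
      funext i; ring
    rwa [heq]
  · have := key t s h
    have heq : (fun i : Cell r T => u (i s) * u (i t))
        = fun i : Cell r T => u (i t) * u (i s) := by
      funext i; ring
    rwa [heq]

end Aux3
section Aux4

variable (u : Fin r → ℝ)

/-- The set of functions of GS[f] linear-predictor form is a submodule. -/
def formSub : Submodule ℝ (Cell r T → ℝ) where
  carrier := {w | ∃ (α : Fin T → ℝ) (B : Matrix (Fin T) (Fin T) ℝ) (γ : Cell r T → ℝ),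
    B.IsSymm ∧ OrbitInvariant γ ∧ ∀ i, w i = quadForm u α B i + γ i}
  zero_mem' := by
    refine ⟨0, 0, 0, ?_, fun i j _ => rfl, fun i => by simp [quadForm]⟩
    rw [Matrix.IsSymm, Matrix.transpose_zero]
  add_mem' := by
    rintro w w' ⟨α, B, γ, hB, hγ, hw⟩ ⟨α', B', γ', hB', hγ', hw'⟩
    refine ⟨α + α', B + B', γ + γ', ?_, ?_, ?_⟩
    · rw [Matrix.IsSymm, Matrix.transpose_add, hB, hB']
    · intro i j hj; simp [hγ i j hj, hγ' i j hj]
    · intro i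
      simp only [Pi.add_apply, hw i, hw' i, quadForm, Matrix.add_apply, add_mul,
        Finset.sum_add_distrib]
      ring
  smul_mem' := by
    rintro c w ⟨α, B, γ, hB, hγ, hw⟩
    refine ⟨c • α, c • B, c • γ, ?_, ?_, ?_⟩
    · rw [Matrix.IsSymm, Matrix.transpose_smul, hB]
    · intro i j hj; simp [hγ i j hj]
    · intro i
      have h1 : ∑ s, (c * α s) * u (i s) = c * ∑ s, α s * u (i s) := by
        rw [Finset.mul_sum]; exact Finset.sum_congr rfl fun s _ => by ring
      have h2 : ∑ s, ∑ t, (c * B s t) * u (i s) * u (i t)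
          = c * ∑ s, ∑ t, B s t * u (i s) * u (i t) := by
        rw [Finset.mul_sum]
        refine Finset.sum_congr rfl fun s _ => ?_
        rw [Finset.mul_sum]
        exact Finset.sum_congr rfl fun t _ => by ring
      simp only [Pi.smul_apply, smul_eq_mul, hw i, quadForm, Matrix.smul_apply]
      rw [h1, h2]; ring

lemma d1_form (h : Fin T) : (fun i : Cell r T => u (i h)) ∈ formSub u := by
  refine ⟨fun s => if s = h then 1 else 0, 0, 0, ?_, fun i j _ => rfl, fun i => ?_⟩
  · rw [Matrix.IsSymm, Matrix.transpose_zero]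
  · simp [quadForm, ite_mul]

lemma d2_form (h : Fin T) : (fun i : Cell r T => u (i h) ^ 2) ∈ formSub u := by
  refine ⟨0, fun s t => (if s = h then 1 else 0) * (if t = h then 1 else 0), 0, ?_,
    fun i j _ => rfl, fun i => ?_⟩
  · refine Matrix.IsSymm.ext fun a b => ?_; beta_reduce; ring
  · have key : ∀ a b : Fin T, ((if a = h then (1:ℝ) else 0) * (if b = h then 1 else 0))
        * u (i a) * u (i b)
        = (if b = h then if a = h then u (i a) * u (i b) else 0 else 0) := by
      intro a b; split_ifs <;> ring
    simp only [quadForm, Pi.zero_apply, zero_mul, Finset.sum_const_zero, zero_add, key,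
      Finset.sum_ite_eq', Finset.mem_univ, if_true, add_zero]
    ring

lemma pc_form (s t : Fin T) : (fun i : Cell r T => u (i s) * u (i t)) ∈ formSub u := by
  refine ⟨0, fun a b => ((if a = s then 1 else 0) * (if b = t then 1 else 0)
    + (if a = t then 1 else 0) * (if b = s then 1 else 0)) / 2, 0, ?_,
    fun i j _ => rfl, fun i => ?_⟩
  · refine Matrix.IsSymm.ext fun a b => ?_; beta_reduce; ring
  · have key : ∀ a b : Fin T, (((if a = s then (1:ℝ) else 0) * (if b = t then 1 else 0)
        + (if a = t then 1 else 0) * (if b = s then 1 else 0)) / 2) * u (i a) * u (i b)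
        = (if b = t then if a = s then u (i a) * u (i b) / 2 else 0 else 0)
          + (if b = s then if a = t then u (i a) * u (i b) / 2 else 0 else 0) := by
      intro a b; split_ifs <;> ring
    simp only [quadForm, Pi.zero_apply, zero_mul, Finset.sum_const_zero, zero_add, key,
      Finset.sum_add_distrib, Finset.sum_ite_eq', Finset.mem_univ, if_true, add_zero]
    ring

lemma indicator_form (i₀ : Cell r T) : (indicatorCol i₀ : Cell r T → ℝ) ∈ formSub u := by
  refine ⟨0, 0, indicatorCol i₀, ?_, indicatorCol_invariant i₀, fun i => ?_⟩
  · rw [Matrix.IsSymm, Matrix.transpose_zero]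
  · simp [quadForm]

lemma span_le_form : Submodule.span ℝ (designColSet u) ≤ formSub (T := T) u := by
  refine Submodule.span_le.2 ?_
  rintro v (((⟨h, hh, rfl⟩ | ⟨h, hh, rfl⟩) | ⟨k, hk, rfl⟩) | ⟨i₀, rfl⟩)
  · exact (formSub u).sub_mem (d1_form u ⟨h, Nat.lt_of_succ_lt hh⟩) (d1_form u ⟨h + 1, hh⟩)
  · exact (formSub u).sub_mem (d2_form u ⟨h, Nat.lt_of_succ_lt hh⟩) (d2_form u ⟨h + 1, hh⟩)
  · exact (formSub u).sub_mem
      (pc_form u (pairEnum T ⟨k, Nat.lt_of_succ_lt hk⟩).val.1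
        (pairEnum T ⟨k, Nat.lt_of_succ_lt hk⟩).val.2)
      (pc_form u (pairEnum T ⟨k + 1, hk⟩).val.1 (pairEnum T ⟨k + 1, hk⟩).val.2)
  · exact indicator_form u i₀

lemma form_le_span (hT : 2 ≤ T) : formSub u ≤ Submodule.span ℝ (designColSet (T := T) u) := by
  have hT0 : 0 < T := by omega
  rintro w ⟨α, B, γ, hB, hγ, hwe⟩
  have hrep : w = ((∑ s : Fin T, α s • (fun i : Cell r T => u (i s)))
      + ∑ s : Fin T, ∑ t : Fin T, B s t • (fun i : Cell r T => u (i s) * u (i t))) + γ := by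
    funext i
    simp only [Pi.add_apply, Finset.sum_apply, Pi.smul_apply, smul_eq_mul, hwe i, quadForm,
      mul_assoc]
  rw [hrep]
  refine Submodule.add_mem _ (Submodule.add_mem _ ?_ ?_) (orbitInvariant_mem_span u hγ)
  · exact Submodule.sum_mem _ fun s _ => Submodule.smul_mem _ _ (d1_mem u hT0 s)
  · exact Submodule.sum_mem _ fun s _ => Submodule.sum_mem _ fun t _ =>
      Submodule.smul_mem _ _ (pc_mem u hT s t)

end Aux4

/-- a vector lies in the column space of the design matrix `X` iff it
has the GS[f] linear-predictor form; consequently `π` satisfies the GS[f] model iff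
`F(π/π^S) = Xϑ` for some parameter vector `ϑ`. -/
theorem stmt3 (r T : ℕ) (hr : 2 ≤ r) (hT : 2 ≤ T)
    (u : Fin r → ℝ) (hu : StrictMono u)
    (f F : ℝ → ℝ) (hf1 : f 1 = 0)
    (hconv : StrictConvexOn ℝ (Set.Ioi 0) f)
    (hderiv : ∀ x ∈ Set.Ioi (0 : ℝ), HasDerivAt f (F x) x)
    (hF2 : ∀ x ∈ Set.Ioi (0 : ℝ), DifferentiableAt ℝ F x) :
    (∀ w : Cell r T → ℝ,
      w ∈ Submodule.span ℝ (designColSet u) ↔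
        ∃ (α : Fin T → ℝ) (B : Matrix (Fin T) (Fin T) ℝ) (γ : Cell r T → ℝ),
          B.IsSymm ∧ OrbitInvariant γ ∧ ∀ i, w i = quadForm u α B i + γ i) ∧
    (∀ π : Cell r T → ℝ, (∀ i, 0 < π i) → ∑ i, π i = 1 →
      (IsGSf u F π ↔
        (fun i => F (π i / symmz π i)) ∈ Submodule.span ℝ (designColSet u))) := by
  have part1 : ∀ w : Cell r T → ℝ,
      w ∈ Submodule.span ℝ (designColSet u) ↔
        ∃ (α : Fin T → ℝ) (B : Matrix (Fin T) (Fin T) ℝ) (γ : Cell r T → ℝ),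
          B.IsSymm ∧ OrbitInvariant γ ∧ ∀ i, w i = quadForm u α B i + γ i := by
    intro w
    exact ⟨fun hw => span_le_form u hw, fun hw => form_le_span u hT hw⟩
  refine ⟨part1, fun π hpos hsum => ?_⟩
  unfold IsGSf
  exact (part1 _).symm

end GSf
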